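/- arXiv:1804.00891 — 2 statements merged into one kernel-verified Lean document; each statement's English description precedes it below -/
import Mathlib

section
/- Acceptance–rejection reparameterization: if ε has density π(ε|θ) = s(ε) · g(h(ε,θ)|θ)/r(h(ε,θ)|θ), where the map ε ↦ h(ε,θ) pushes the density s forward to the proposal density r(·|θ), then for every measurable bounded f, E_{π(ε|θ)}[f(h(ε,θ))] = E_{g(ω|θ)}[f(ω)]. -/
open MeasureTheory

/-- Acceptance–rejection reparameterization: if `ε` has density
`π(ε) = s(ε) · g(h(ε))/r(h(ε))`, where `h` pushes the density `s` forward to the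
proposal density `r`, then for every bounded measurable `f`,
`E_{π}[f(h(ε))] = E_{g}[f(ω)]`. -/
theorem stmt_7
    (s r g : ℝ → ℝ) (h : ℝ → ℝ) (f : ℝ → ℝ)
    (hs : Measurable s) (hr : Measurable r) (hg : Measurable g) (hh : Measurable h)
    (hf : Measurable f)
    (hs0 : ∀ ε, 0 ≤ s ε) (hr0 : ∀ ω, 0 ≤ r ω) (hg0 : ∀ ω, 0 ≤ g ω)
    -- s, r, g are probability densities
    (hs1 : ∫ ε, s ε = 1) (hr1 : ∫ ω, r ω = 1) (hg1 : ∫ ω, g ω = 1)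
    -- g/r is well-defined: r > 0 wherever g > 0
    (hgr : ∀ ω, 0 < g ω → 0 < r ω)
    -- h pushes the density s forward to the density r
    (hpush : Measure.map h (volume.withDensity fun ε => ENNReal.ofReal (s ε)) =
      volume.withDensity fun ω => ENNReal.ofReal (r ω))
    -- f is bounded
    (hbd : ∃ C, ∀ x, |f x| ≤ C)
    (π : ℝ → ℝ) (hπ : ∀ ε, π ε = s ε * g (h ε) / r (h ε)) :
    ∫ ε, f (h ε) * π ε = ∫ ω, f ω * g ω := by

  set F : ℝ → ℝ := fun ω => f ω * g ω / r ω with hF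
  have hFmeas : Measurable F := (hf.mul hg).div hr
  have step1 : ∫ ε, f (h ε) * π ε = ∫ ε, (s ε).toNNReal • F (h ε) := by
    congr 1 with ε
    simp only [hπ, hF, NNReal.smul_def, Real.coe_toNNReal _ (hs0 ε), smul_eq_mul]
    ring
  have step2 : ∫ ε, (s ε).toNNReal • F (h ε)
      = ∫ ε, F (h ε) ∂(volume.withDensity (fun ε => ENNReal.ofReal (s ε))) := by
    rw [show (fun ε => ENNReal.ofReal (s ε)) = (fun ε => ((s ε).toNNReal : ENNReal)) from rfl]
    exact (integral_withDensity_eq_integral_smul (hs.real_toNNReal) _).symm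
  have step3 : ∫ ε, F (h ε) ∂(volume.withDensity (fun ε => ENNReal.ofReal (s ε)))
      = ∫ ω, F ω ∂(Measure.map h (volume.withDensity (fun ε => ENNReal.ofReal (s ε)))) :=
    (integral_map hh.aemeasurable hFmeas.aestronglyMeasurable).symm
  have step4 : ∫ ω, F ω ∂(volume.withDensity (fun ω => ENNReal.ofReal (r ω)))
      = ∫ ω, (r ω).toNNReal • F ω := by
    rw [show (fun ω => ENNReal.ofReal (r ω)) = (fun ω => ((r ω).toNNReal : ENNReal)) from rfl]
    exact integral_withDensity_eq_integral_smul (hr.real_toNNReal) _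
  have step5 : ∫ ω, (r ω).toNNReal • F ω = ∫ ω, f ω * g ω := by
    congr 1 with ω
    simp only [hF, NNReal.smul_def, Real.coe_toNNReal _ (hr0 ω), smul_eq_mul]
    rcases eq_or_ne (r ω) 0 with h0 | h0
    · have hg0' : g ω = 0 := by
        by_contra hne
        have := hgr ω (lt_of_le_of_ne (hg0 ω) (Ne.symm hne))
        rw [h0] at this; exact lt_irrefl 0 this
      simp [h0, hg0']
    · field_simp
  rw [step1, step2, step3, hpush, step4, step5]
end

section
/- Two-stage reparameterization: with ε ∼ π₁(ε|θ) = s(ε)g(h(ε,θ)|θ)/r(h(ε,θ)|θ) and v ∼ π₂(v) independent, and a measurable transformation T such that T(ω, v; θ) with ω ∼ g(·|θ), v ∼ π₂ has distribution q(·|θ), one has E_{(ε,v)∼π₁⊗π₂}[f(T(h(ε,θ), v; θ))] = E_{q(z|θ)}[f(z)] for all bounded measurable f. -/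
/-!
Reweighting the base density `s` by `(g / r) ∘ h` and pushing forward along `h` is the same as
pushing `s` forward to `r` first and then reweighting by `g / r`; this gives `g`, so `h` maps the
accepted-sample law `π₁` to `g`. Hence `(ε, v) ↦ T (h ε) v` maps `π₁ ⊗ π₂` to the pushforward
of `g ⊗ π₂` under `T`, which is `q`, and the expectations agree by change of variables.
-/

open MeasureTheory

theorem ENNReal.ofReal_mul_ofReal_div_cancel {a b : ℝ} (hab : 0 < b → 0 < a) :
    ENNReal.ofReal a * ENNReal.ofReal (b / a) = ENNReal.ofReal b := by
  rcases le_or_gt a 0 with ha | ha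
  · have hb : b ≤ 0 := le_of_not_gt fun hb => (hab hb).not_ge ha
    simp [ENNReal.ofReal_of_nonpos ha, ENNReal.ofReal_of_nonpos hb]
  · rw [← ENNReal.ofReal_mul ha.le, mul_div_cancel₀ _ ha.ne']

namespace MeasureTheory.Measure

variable {α β : Type*} [MeasurableSpace α] [MeasurableSpace β]

theorem map_withDensity_comp (μ : Measure α) {h : α → β} (hh : Measurable h)
    {w : β → ENNReal} (hw : Measurable w) :
    map h (μ.withDensity (w ∘ h)) = (map h μ).withDensity w := by
  ext t ht
  rw [map_apply hh ht, withDensity_apply _ (hh ht), withDensity_apply _ ht,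
    restrict_map hh ht, lintegral_map hw hh]
  rfl

theorem map_withDensity_acceptReject (μ : Measure α) (ν : Measure β)
    {s : α → ℝ} {r g : β → ℝ} {h : α → β}
    (hs : Measurable s) (hr : Measurable r) (hg : Measurable g) (hh : Measurable h)
    (hs0 : ∀ x, 0 ≤ s x) (hgr : ∀ y, 0 < g y → 0 < r y)
    (hpush : map h (μ.withDensity fun x => ENNReal.ofReal (s x)) =
      ν.withDensity fun y => ENNReal.ofReal (r y)) :
    map h (μ.withDensity fun x => ENNReal.ofReal (s x * g (h x) / r (h x))) =
      ν.withDensity fun y => ENNReal.ofReal (g y) := by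
  set w : β → ENNReal := fun y => ENNReal.ofReal (g y / r y)
  have hw : Measurable w := (hg.div hr).ennreal_ofReal
  have hdens : (fun x => ENNReal.ofReal (s x * g (h x) / r (h x))) =
      (fun x => ENNReal.ofReal (s x)) * (w ∘ h) := by
    funext x
    simp only [Pi.mul_apply, Function.comp_apply, w, mul_div_assoc,
      ENNReal.ofReal_mul (hs0 x)]
  rw [hdens, withDensity_mul _ hs.ennreal_ofReal (hw.comp hh),
    map_withDensity_comp _ hh hw, hpush, ← withDensity_mul _ hr.ennreal_ofReal hw]
  congr 1
  funext y
  exact ENNReal.ofReal_mul_ofReal_div_cancel (hgr y)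

theorem map_comp_fst_prod {γ δ : Type*} [MeasurableSpace γ] [MeasurableSpace δ]
    (μ : Measure α) (π : Measure γ) [SFinite μ] [SFinite π]
    {h : α → β} {T : β → γ → δ} (hh : Measurable h) (hT : Measurable (Function.uncurry T)) :
    map (fun p : α × γ => T (h p.1) p.2) (μ.prod π) =
      map (fun p : β × γ => T p.1 p.2) ((map h μ).prod π) := by
  have hprod : (map h μ).prod π = map (Prod.map h id) (μ.prod π) := by
    rw [← map_prod_map _ _ hh measurable_id, map_id]
  rw [hprod]
  exact (map_map hT (hh.prodMap measurable_id)).symm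

end MeasureTheory.Measure

theorem stmt_8_general
    {V : Type*} [MeasurableSpace V]
    (s r g : ℝ → ℝ) (h : ℝ → ℝ) (f : ℝ → ℝ)
    (π₂ : Measure V) [IsProbabilityMeasure π₂]
    (T : ℝ → V → ℝ)
    (hs : Measurable s) (hr : Measurable r) (hg : Measurable g) (hh : Measurable h)
    (hf : Measurable f) (hT : Measurable (Function.uncurry T))
    (hs0 : ∀ ε, 0 ≤ s ε)
    (hgr : ∀ ω, 0 < g ω → 0 < r ω)
    -- h pushes the density s forward to the proposal density r
    (hpush : Measure.map h (volume.withDensity fun ε => ENNReal.ofReal (s ε)) =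
      volume.withDensity fun ω => ENNReal.ofReal (r ω))
    -- π₁ is the density of the accepted sample
    (π₁ : ℝ → ℝ) (hπ₁ : ∀ ε, π₁ ε = s ε * g (h ε) / r (h ε))
    -- q is the pushforward of g ⊗ π₂ under (ω, v) ↦ T ω v
    (q : Measure ℝ)
    (hq : Measure.map (fun p : ℝ × V => T p.1 p.2)
        (((volume.withDensity fun ω => ENNReal.ofReal (g ω)).prod π₂)) = q) :
    ∫ p : ℝ × V, f (T (h p.1) p.2)
        ∂(((volume.withDensity fun ε => ENNReal.ofReal (π₁ ε)).prod π₂)) =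
      ∫ z, f z ∂q := by
  have hπ₁_map : Measure.map h (volume.withDensity fun ε => ENNReal.ofReal (π₁ ε)) =
      volume.withDensity fun ω => ENNReal.ofReal (g ω) := by
    simp only [hπ₁]
    exact Measure.map_withDensity_acceptReject _ _ hs hr hg hh hs0 hgr hpush
  have hlaw : Measure.map (fun p : ℝ × V => T (h p.1) p.2)
      ((volume.withDensity fun ε => ENNReal.ofReal (π₁ ε)).prod π₂) = q := by
    rw [Measure.map_comp_fst_prod _ _ hh hT, hπ₁_map, hq]
  rw [← hlaw]
  exact (integral_map (hT.comp (hh.prodMap measurable_id)).aemeasurable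
    hf.aestronglyMeasurable).symm

/-- Two-stage reparameterization: with `ε ∼ π₁(ε) = s(ε)g(h(ε))/r(h(ε))` and
`v ∼ π₂` independent, and a measurable transformation `T` such that `T(ω, v)` with
`ω ∼ g`, `v ∼ π₂` has distribution `q`, one has
`E_{(ε,v)∼π₁⊗π₂}[f(T(h(ε), v))] = E_{q}[f(z)]` for all bounded measurable `f`. -/
theorem stmt_8
    {V : Type*} [MeasurableSpace V]
    (s r g : ℝ → ℝ) (h : ℝ → ℝ) (f : ℝ → ℝ)
    (π₂ : Measure V) [IsProbabilityMeasure π₂]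
    (T : ℝ → V → ℝ)
    (hs : Measurable s) (hr : Measurable r) (hg : Measurable g) (hh : Measurable h)
    (hf : Measurable f) (hT : Measurable (Function.uncurry T))
    (hs0 : ∀ ε, 0 ≤ s ε) (hr0 : ∀ ω, 0 ≤ r ω) (hg0 : ∀ ω, 0 ≤ g ω)
    (hs1 : ∫ ε, s ε = 1) (hr1 : ∫ ω, r ω = 1) (hg1 : ∫ ω, g ω = 1)
    (hgr : ∀ ω, 0 < g ω → 0 < r ω)
    -- h pushes the density s forward to the proposal density r
    (hpush : Measure.map h (volume.withDensity fun ε => ENNReal.ofReal (s ε)) =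
      volume.withDensity fun ω => ENNReal.ofReal (r ω))
    -- f is bounded
    (hbd : ∃ C, ∀ x, |f x| ≤ C)
    -- π₁ is the density of the accepted sample
    (π₁ : ℝ → ℝ) (hπ₁ : ∀ ε, π₁ ε = s ε * g (h ε) / r (h ε))
    -- q is the pushforward of g ⊗ π₂ under (ω, v) ↦ T ω v
    (q : Measure ℝ) [IsProbabilityMeasure q]
    (hq : Measure.map (fun p : ℝ × V => T p.1 p.2)
        (((volume.withDensity fun ω => ENNReal.ofReal (g ω)).prod π₂)) = q) :
    ∫ p : ℝ × V, f (T (h p.1) p.2)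
        ∂(((volume.withDensity fun ε => ENNReal.ofReal (π₁ ε)).prod π₂)) =
      ∫ z, f z ∂q :=
  stmt_8_general s r g h f π₂ T hs hr hg hh hf hT hs0 hgr hpush π₁ hπ₁ q hq
end
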